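/- arXiv:2209.13194 — 17 statements merged into one kernel-verified Lean document; each statement's English description precedes it below -/
import Mathlib

section
/- If an associative unital algebra A over a field F is two-sided zero product determined, then A is zero product determined. -/
def IsZpd (F A : Type*) [Field F] [Ring A] [Algebra F A] : Prop :=
  ∀ φ : A →ₗ[F] A →ₗ[F] F, (∀ x y : A, x * y = 0 → φ x y = 0) →
    ∃ τ : A →ₗ[F] F, ∀ x y : A, φ x y = τ (x * y)

def Is2Zpd (F A : Type*) [Field F] [Ring A] [Algebra F A] : Prop :=
  ∀ φ : A →ₗ[F] A →ₗ[F] F, (∀ x y : A, x * y = 0 → y * x = 0 → φ x y = 0) →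
    ∃ τ₁ τ₂ : A →ₗ[F] F, ∀ x y : A, φ x y = τ₁ (x * y) + τ₂ (y * x)

def IsZLpd (F A : Type*) [Field F] [Ring A] [Algebra F A] : Prop :=
  ∀ φ : A →ₗ[F] A →ₗ[F] F, (∀ x y : A, x * y = y * x → φ x y = 0) →
    ∃ τ : A →ₗ[F] F, ∀ x y : A, φ x y = τ (x * y - y * x)

theorem two_sided_zpd_implies_zpd (F A : Type*) [Field F] [Ring A] [Algebra F A]
    (h : Is2Zpd F A) : IsZpd F A := by
  intro φ hφ
  refine ⟨φ.flip 1, fun x y => ?_⟩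
  -- For fixed x, consider B(u,v) = φ(xu, v) - φ(x, uv)
  let B : A →ₗ[F] A →ₗ[F] F :=
    LinearMap.mk₂ F (fun u v => φ (x * u) v - φ x (u * v))
      (fun u u' v => by simp [mul_add, add_mul]; ring)
      (fun c u v => by simp [mul_smul_comm, smul_sub, mul_sub])
      (fun u v v' => by simp [mul_add]; ring)
      (fun c u v => by simp [mul_smul_comm, smul_sub, mul_sub])
  have hB : ∀ u v : A, u * v = 0 → v * u = 0 → B u v = 0 := by
    intro u v huv _
    have h1 : (x * u) * v = 0 := by rw [mul_assoc, huv, mul_zero]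
    simp [B, huv, hφ _ _ h1]
  obtain ⟨σ₁, σ₂, hσ⟩ := h B hB
  have key : ∀ v : A, σ₁ v + σ₂ v = 0 := by
    intro v
    have := hσ 1 v
    simpa [B] using this.symm
  have := hσ y 1
  simp only [B, LinearMap.mk₂_apply, mul_one, one_mul] at this
  have h0 := key y
  have : φ (x * y) 1 - φ x y = 0 := by rw [this, h0]
  simp only [LinearMap.flip_apply]
  exact (sub_eq_zero.mp this).symm
end

section
/- If an associative unital algebra A over a field F is two-sided zero product determined, then A is zero Lie product determined. -/
theorem two_sided_zpd_implies_zLpd (F A : Type*) [Field F] [Ring A] [Algebra F A]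
    (h : Is2Zpd F A) : IsZLpd F A := by
  intro φ hφ
  obtain ⟨τ₁, τ₂, hτ⟩ := h φ (fun x y hxy hyx => hφ x y (by rw [hxy, hyx]))
  refine ⟨τ₁, fun x y => ?_⟩
  have key : ∀ z : A, τ₂ z = -τ₁ z := by
    intro z
    have h0 : φ z 1 = 0 := hφ z 1 (by rw [mul_one, one_mul])
    have := hτ z 1
    rw [mul_one, one_mul, h0] at this
    linear_combination -this
  rw [hτ x y, key (y * x), map_sub]
  ring
end

section
/- Let A be a unital algebra and φ: A × A → F a bilinear functional. Then there exist linear functionals τ₁, τ₂ on A with φ(x,y) = τ₁(xy) + τ₂(yx) for all x, y if and only if there exists a linear functional τ on A with φ(x,y) − φ(xy,1) = τ(xy − yx) for all x, y. -/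
theorem two_sided_form_iff (F A : Type*) [Field F] [Ring A] [Algebra F A]
    (φ : A →ₗ[F] A →ₗ[F] F) :
    (∃ τ₁ τ₂ : A →ₗ[F] F, ∀ x y : A, φ x y = τ₁ (x * y) + τ₂ (y * x)) ↔
    (∃ τ : A →ₗ[F] F, ∀ x y : A, φ x y - φ (x * y) 1 = τ (x * y - y * x)) := by
  constructor
  · rintro ⟨τ₁, τ₂, h⟩
    refine ⟨-τ₂, fun x y => ?_⟩
    have h1 := h (x * y) 1
    simp only [mul_one, one_mul] at h1
    rw [h x y, h1]
    simp [map_sub]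
    ring
  · rintro ⟨τ, h⟩
    refine ⟨φ.flip 1 + τ, -τ, fun x y => ?_⟩
    have := h x y
    simp only [LinearMap.add_apply, LinearMap.neg_apply, LinearMap.flip_apply, map_sub] at *
    linear_combination this
end

section
/- Let A be a zpd algebra and φ: A × A → F a bilinear functional such that φ(x,y) = 0 whenever xy = yx = 0. Then φ(xy, zw) + φ(wx, yz) = φ(x, yzw) + φ(wxy, z) for all x, y, z, w ∈ A. -/
theorem zpd_two_sided_identity (F A : Type*) [Field F] [Ring A] [Algebra F A]
    (hzpd : IsZpd F A) (φ : A →ₗ[F] A →ₗ[F] F)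
    (hφ : ∀ x y : A, x * y = 0 → y * x = 0 → φ x y = 0) :
    ∀ x y z w : A,
      φ (x * y) (z * w) + φ (w * x) (y * z) = φ x (y * z * w) + φ (w * x * y) z := by
  have key : ∀ u v : A, v * u = 0 → ∀ y : A, φ (u * y) v = φ u (y * v) := by
    intro u v hvu y
    set ρ : A →ₗ[F] A →ₗ[F] F := LinearMap.mk₂ F (fun s t => φ (u * s) (t * v))
      (by intro s s' t; simp [mul_add])
      (by intro c s t; simp [mul_smul_comm])
      (by intro s t t'; simp [add_mul])
      (by intro c s t; simp [smul_mul_assoc]) with hρ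
    obtain ⟨τ, hτ⟩ := hzpd ρ (by
      intro s t hst
      have h1 : (u * s) * (t * v) = 0 := by
        rw [mul_assoc, ← mul_assoc s t v, hst, zero_mul, mul_zero]
      have h2 : (t * v) * (u * s) = 0 := by
        rw [mul_assoc, ← mul_assoc v u s, hvu, zero_mul, mul_zero]
      simpa [hρ] using hφ _ _ h1 h2)
    have e1 := hτ y 1
    have e2 := hτ 1 y
    simp only [hρ, LinearMap.mk₂_apply, one_mul, mul_one] at e1 e2
    rw [e1, e2]
  intro x y z w
  set D : A →ₗ[F] A →ₗ[F] F := LinearMap.mk₂ F (fun v u => φ (u * y) v - φ u (y * v))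
    (by intro v v' u; simp [mul_add]; ring)
    (by intro c v u; simp [mul_smul_comm, smul_sub]; ring)
    (by intro v u u'; simp [add_mul, mul_add]; ring)
    (by intro c v u; simp [smul_mul_assoc, mul_smul_comm, smul_sub]; ring) with hD
  obtain ⟨τ, hτ⟩ := hzpd D (by
    intro v u hvu
    simp [hD, key u v hvu y])
  have e1 := hτ (z * w) x
  have e2 := hτ z (w * x)
  simp only [hD, LinearMap.mk₂_apply] at e1 e2
  rw [mul_assoc z w x] at e1
  rw [show y * (z * w) = y * z * w by rw [mul_assoc]] at e1
  linear_combination e1 - e2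
end

section
/- Let A be a zpd algebra of characteristic not 2 and φ: A × A → F a symmetric bilinear functional such that φ(x,y) = 0 whenever xy = yx = 0. Then φ(y,w) = (1/2)·φ(yw + wy, 1) for all y, w ∈ A. -/
theorem zpd_symmetric_two_sided (F A : Type*) [Field F] [Ring A] [Algebra F A]
    (hchar : (2 : F) ≠ 0) (hzpd : IsZpd F A) (φ : A →ₗ[F] A →ₗ[F] F)
    (hsymm : ∀ x y : A, φ x y = φ y x)
    (hφ : ∀ x y : A, x * y = 0 → y * x = 0 → φ x y = 0) :
    ∀ y w : A, φ y w = (2 : F)⁻¹ * φ (y * w + w * y) 1 := by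
  -- Lemma A
  have lemA : ∀ a b : A, a * b = 0 → ∀ u x : A, φ (x * a) (b * u) = φ (u * (x * a)) b := by
    intro a b hab
    let C : A →ₗ[F] A →ₗ[F] F := LinearMap.mk₂ F
      (fun u x => φ (x * a) (b * u) - φ (u * (x * a)) b)
      (by intro m m' n
          simp only [mul_add, add_mul, map_add, LinearMap.add_apply]
          ring)
      (by intro c m n
          simp only [smul_mul_assoc, mul_smul_comm, map_smul, LinearMap.smul_apply,
            smul_eq_mul]
          ring)
      (by intro m n n'
          simp only [mul_add, add_mul, map_add, LinearMap.add_apply]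
          ring)
      (by intro c m n
          simp only [smul_mul_assoc, mul_smul_comm, map_smul, LinearMap.smul_apply,
            smul_eq_mul]
          ring)
    obtain ⟨τ, hτ⟩ := hzpd C (by
      intro u x hux
      have h1 : (x * a) * (b * u) = 0 := by
        rw [mul_assoc, ← mul_assoc a b u, hab, zero_mul, mul_zero]
      have h2 : (b * u) * (x * a) = 0 := by
        rw [mul_assoc, ← mul_assoc u x a, hux, zero_mul, mul_zero]
      have h3 : u * (x * a) = 0 := by rw [← mul_assoc, hux, zero_mul]
      simp only [C, LinearMap.mk₂_apply, h3, map_zero, LinearMap.zero_apply,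
        hφ _ _ h1 h2, sub_zero])
    have hτ0 : ∀ z : A, τ z = 0 := by
      intro z
      have := hτ 1 z
      simp only [C, LinearMap.mk₂_apply, mul_one, one_mul] at this
      simp only [sub_self] at this
      exact this.symm
    intro u x
    have := hτ u x
    simp only [C, LinearMap.mk₂_apply, hτ0] at this
    linear_combination (norm := ring_nf) this
  -- key identity
  have key : ∀ w y z : A, φ y (z * w) + φ w (y * z) = φ 1 (y * z * w) + φ (w * y) z := by
    intro w
    let B : A →ₗ[F] A →ₗ[F] F := LinearMap.mk₂ F
      (fun y z => φ y (z * w) + φ w (y * z) - φ 1 (y * z * w) - φ (w * y) z)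
      (by intro m m' n
          simp only [mul_add, add_mul, map_add, LinearMap.add_apply]
          ring)
      (by intro c m n
          simp only [smul_mul_assoc, mul_smul_comm, map_smul, LinearMap.smul_apply,
            smul_eq_mul]
          ring)
      (by intro m n n'
          simp only [mul_add, add_mul, map_add, LinearMap.add_apply]
          ring)
      (by intro c m n
          simp only [smul_mul_assoc, mul_smul_comm, map_smul, LinearMap.smul_apply,
            smul_eq_mul]
          ring)
    obtain ⟨τ, hτ⟩ := hzpd B (by
      intro y z hyz
      have hA := lemA y z hyz w 1
      simp only [one_mul] at hA
      simp only [B, LinearMap.mk₂_apply, hyz, zero_mul, map_zero, hA]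
      ring)
    have hτ0 : ∀ z : A, τ z = 0 := by
      intro z
      have := hτ 1 z
      simp only [B, LinearMap.mk₂_apply, mul_one, one_mul] at this
      simp only [sub_self, zero_sub, add_sub_cancel_left] at this
      -- this : something = τ z; massage
      have h' : (0 : F) = τ z := by
        have := hτ 1 z
        simp only [B, LinearMap.mk₂_apply, mul_one, one_mul] at this
        rw [← this]
        ring
      exact h'.symm
    intro y z
    have := hτ y z
    simp only [B, LinearMap.mk₂_apply, hτ0] at this
    linear_combination (norm := ring_nf) this
  intro y w
  have hk := key w y 1
  simp only [one_mul, mul_one] at hk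
  have h2 : φ y w + φ y w = φ (y * w + w * y) 1 := by
    rw [map_add, LinearMap.add_apply]
    calc φ y w + φ y w = φ y w + φ w y := by rw [hsymm y w]
    _ = φ 1 (y * w) + φ (w * y) 1 := hk
    _ = φ (y * w) 1 + φ (w * y) 1 := by rw [hsymm 1 (y*w)]
  rw [eq_comm, inv_mul_eq_iff_eq_mul₀ hchar, two_mul]
  exact h2.symm
end

section
/- Let A be a 2-zpd algebra, X a vector space over F, and Φ: A × A → X a bilinear map such that Φ(x,y) = 0 whenever xy = yx = 0. Then there exists a linear map T from the span of commutators [A,A] to X such that Φ(x,y) − Φ(xy,1) = T(xy − yx) for all x, y ∈ A. -/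
theorem two_sided_zpd_vector_valued (F A : Type*) [Field F] [Ring A] [Algebra F A]
    (h : Is2Zpd F A) (X : Type*) [AddCommGroup X] [Module F X]
    (Φ : A →ₗ[F] A →ₗ[F] X)
    (hΦ : ∀ x y : A, x * y = 0 → y * x = 0 → Φ x y = 0) :
    ∃ T : ↥(Submodule.span F {a : A | ∃ x y : A, a = x * y - y * x}) →ₗ[F] X,
      ∀ x y : A, Φ x y - Φ (x * y) 1 =
        T ⟨x * y - y * x, Submodule.subset_span ⟨x, y, rfl⟩⟩ := by
  classical
  set C : Set A := {a : A | ∃ x y : A, a = x * y - y * x} with hC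
  set S : A →ₗ[F] A →ₗ[F] X := Φ - ((LinearMap.mul F A).compr₂ (Φ.flip 1)) with hS
  have hSval : ∀ x y : A, S x y = Φ x y - Φ (x * y) 1 := by
    intro x y; simp [hS]
  -- key: for each dual functional f, f ∘ S factors through yx - xy
  have key : ∀ f : Module.Dual F X, ∃ τ : A →ₗ[F] F, ∀ x y : A,
      f (S x y) = τ (y * x - x * y) := by
    intro f
    obtain ⟨τ₁, τ₂, hτ⟩ := h (Φ.compr₂ f) (fun x y h1 h2 => by
      simp [LinearMap.compr₂_apply, hΦ x y h1 h2])
    refine ⟨τ₂, fun x y => ?_⟩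
    have h1 := hτ x y
    have h2 := hτ (x * y) 1
    simp only [LinearMap.compr₂_apply] at h1 h2
    rw [hSval, map_sub, h1, h2]
    simp [map_sub]
  set W : Submodule F (A × X) :=
    Submodule.span F {p : A × X | ∃ x y : A, p = (x * y - y * x, S x y)} with hW
  -- separation: elements of W with zero first component have zero second component
  have sep : ∀ w ∈ W, w.1 = 0 → w.2 = 0 := by
    intro w hw hw1
    rw [← Module.forall_dual_apply_eq_zero_iff F]
    intro f
    obtain ⟨τ, hτ⟩ := key f
    set L : (A × X) →ₗ[F] F :=
      f.comp (LinearMap.snd F A X) + τ.comp (LinearMap.fst F A X) with hL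
    have hLW : W ≤ LinearMap.ker L := by
      rw [hW, Submodule.span_le]
      rintro p ⟨x, y, rfl⟩
      simp only [SetLike.mem_coe, LinearMap.mem_ker, hL, LinearMap.add_apply,
        LinearMap.comp_apply, LinearMap.snd_apply, LinearMap.fst_apply]
      rw [hτ x y]
      rw [← map_add]
      simp
    have := hLW hw
    simp only [LinearMap.mem_ker, hL, LinearMap.add_apply, LinearMap.comp_apply,
      LinearMap.snd_apply, LinearMap.fst_apply, hw1, map_zero, add_zero] at this
    exact this
  have hmem : ∀ w : W, (w : A × X).1 ∈ Submodule.span F C := by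
    intro w
    have : Submodule.map (LinearMap.fst F A X) W ≤ Submodule.span F C := by
      rw [hW, Submodule.map_span, Submodule.span_le]
      rintro a ⟨p, ⟨x, y, rfl⟩, rfl⟩
      exact Submodule.subset_span ⟨x, y, rfl⟩
    exact this ⟨w, w.2, rfl⟩
  set π : W →ₗ[F] ↥(Submodule.span F C) :=
    LinearMap.codRestrict _ ((LinearMap.fst F A X).comp W.subtype) hmem with hπ
  have hinj : Function.Injective π := by
    intro w w' hww
    have h1 : (w : A × X).1 = (w' : A × X).1 := congrArg Subtype.val hww
    have h2 : ((w : A × X) - (w' : A × X)).1 = 0 := by simp [h1]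
    have h2' : ((w : A × X) - (w' : A × X)).2 = 0 :=
      sep _ (W.sub_mem w.2 w'.2) h2
    have : (w : A × X) = (w' : A × X) := by
      apply Prod.ext
      · simpa [sub_eq_zero] using h1
      · simpa [sub_eq_zero] using h2'
    exact Subtype.ext this
  have hsurj : Function.Surjective π := by
    have hle : Submodule.span F C ≤ Submodule.map (LinearMap.fst F A X) W := by
      rw [Submodule.span_le]
      rintro a ⟨x, y, rfl⟩
      exact ⟨(x * y - y * x, S x y), Submodule.subset_span ⟨x, y, rfl⟩, rfl⟩
    rintro ⟨c, hc⟩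
    obtain ⟨p, hpW, hp⟩ := hle hc
    exact ⟨⟨p, hpW⟩, Subtype.ext hp⟩
  set e := LinearEquiv.ofBijective π ⟨hinj, hsurj⟩ with he
  refine ⟨((LinearMap.snd F A X).comp W.subtype).comp e.symm.toLinearMap, fun x y => ?_⟩
  set w : W := ⟨(x * y - y * x, S x y), Submodule.subset_span ⟨x, y, rfl⟩⟩ with hw
  have hew : e w = ⟨x * y - y * x, Submodule.subset_span ⟨x, y, rfl⟩⟩ := by
    apply Subtype.ext
    rfl
  have : e.symm ⟨x * y - y * x, Submodule.subset_span ⟨x, y, rfl⟩⟩ = w := by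
    rw [← hew, LinearEquiv.symm_apply_apply]
  simp only [LinearMap.comp_apply, LinearEquiv.coe_coe, this]
  rw [← hSval]
  rfl
end

section
/- If A is a 2-zpd algebra, then for all commuting elements z, w ∈ A (i.e., zw = wz), the element z ⊗ w − zw ⊗ 1 lies in the linear span of elements x ⊗ y with xy = yx = 0 in A ⊗ A. -/
open TensorProduct in
theorem two_sided_zpd_tensor (F A : Type*) [Field F] [Ring A] [Algebra F A]
    (h : Is2Zpd F A) :
    ∀ z w : A, z * w = w * z →
      z ⊗ₜ[F] w - (z * w) ⊗ₜ[F] (1 : A) ∈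
        Submodule.span F {t : A ⊗[F] A | ∃ x y : A, x * y = 0 ∧ y * x = 0 ∧ t = x ⊗ₜ[F] y} := by
  intro z w hzw
  set W : Submodule F (A ⊗[F] A) :=
    Submodule.span F {t : A ⊗[F] A | ∃ x y : A, x * y = 0 ∧ y * x = 0 ∧ t = x ⊗ₜ[F] y} with hW
  by_contra hv
  set v : A ⊗[F] A := z ⊗ₜ[F] w - (z * w) ⊗ₜ[F] (1 : A) with hvdef
  have hq : W.mkQ v ≠ 0 := by
    simpa [Submodule.Quotient.mk_eq_zero] using hv
  obtain ⟨g, hg⟩ : ∃ g : ((A ⊗[F] A) ⧸ W) →ₗ[F] F, g (W.mkQ v) ≠ 0 := by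
    by_contra hcon
    push_neg at hcon
    exact hq ((Module.forall_dual_apply_eq_zero_iff F _).mp hcon)
  set f : A ⊗[F] A →ₗ[F] F := g ∘ₗ W.mkQ with hf
  set φ : A →ₗ[F] A →ₗ[F] F := (TensorProduct.mk F A A).compr₂ f with hφ
  obtain ⟨τ₁, τ₂, hτ⟩ := h φ (by
    intro x y hxy hyx
    have hmem : x ⊗ₜ[F] y ∈ W := Submodule.subset_span ⟨x, y, hxy, hyx, rfl⟩
    have : W.mkQ (x ⊗ₜ[F] y) = 0 := by
      simpa [Submodule.Quotient.mk_eq_zero] using hmem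
    simp [hφ, hf, TensorProduct.mk, this])
  apply hg
  have : f v = 0 := by
    have h1 : f (z ⊗ₜ[F] w) = τ₁ (z * w) + τ₂ (w * z) := hτ z w
    have h2 : f ((z * w) ⊗ₜ[F] (1 : A)) = τ₁ (z * w * 1) + τ₂ (1 * (z * w)) := hτ (z * w) 1
    rw [hvdef, map_sub, h1, h2, mul_one, one_mul, hzw]
    ring
  simpa [hf] using this
end

section
/- Let A be an algebra that is zLpd and such that for all commuting z, w ∈ A, z ⊗ w − zw ⊗ 1 lies in the span of {x ⊗ y : xy = yx = 0} inside A ⊗ A. Then A is 2-zpd. -/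
open TensorProduct in
theorem zLpd_tensor_implies_two_sided_zpd (F A : Type*) [Field F] [Ring A] [Algebra F A]
    (hL : IsZLpd F A)
    (ht : ∀ z w : A, z * w = w * z →
      z ⊗ₜ[F] w - (z * w) ⊗ₜ[F] (1 : A) ∈
        Submodule.span F {t : A ⊗[F] A | ∃ x y : A, x * y = 0 ∧ y * x = 0 ∧ t = x ⊗ₜ[F] y}) :
    Is2Zpd F A := by
  intro φ hφ
  set Φ : A ⊗[F] A →ₗ[F] F := TensorProduct.lift φ with hΦ
  have hker : Submodule.span F {t : A ⊗[F] A | ∃ x y : A, x * y = 0 ∧ y * x = 0 ∧ t = x ⊗ₜ[F] y}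
      ≤ LinearMap.ker Φ := by
    rw [Submodule.span_le]
    rintro t ⟨x, y, hxy, hyx, rfl⟩
    simp [Φ, hφ x y hxy hyx]
  set ω : A →ₗ[F] F := φ.flip 1 with hω
  have hcomm : ∀ z w : A, z * w = w * z → φ z w = ω (z * w) := by
    intro z w h
    have := hker (ht z w h)
    rw [LinearMap.mem_ker, map_sub] at this
    have h1 : Φ (z ⊗ₜ[F] w) = φ z w := rfl
    have h2 : Φ ((z * w) ⊗ₜ[F] (1 : A)) = φ (z * w) 1 := rfl
    rw [h1, h2] at this
    have : φ z w = φ (z * w) 1 := sub_eq_zero.mp this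
    simpa [ω] using this
  set ψ : A →ₗ[F] A →ₗ[F] F := φ - (LinearMap.mul F A).compr₂ ω with hψ
  obtain ⟨τ, hτ⟩ := hL ψ (by
    intro x y h
    have := hcomm x y h
    simp [ψ, this])
  refine ⟨ω + τ, -τ, fun x y => ?_⟩
  have := hτ x y
  simp only [ψ, LinearMap.sub_apply, LinearMap.compr₂_apply, LinearMap.mul_apply'] at this
  have h2 : φ x y = ω (x * y) + τ (x * y - y * x) := by linear_combination this
  simp only [map_sub] at h2
  simp only [LinearMap.add_apply, LinearMap.neg_apply]
  linear_combination h2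
end

section
/- Algebras A₁ and A₂ are both 2-zpd if and only if their direct product A₁ × A₂ is 2-zpd. -/
theorem two_sided_zpd_prod (F A₁ A₂ : Type*) [Field F] [Ring A₁] [Algebra F A₁]
    [Ring A₂] [Algebra F A₂] :
    (Is2Zpd F A₁ ∧ Is2Zpd F A₂) ↔ Is2Zpd F (A₁ × A₂) := by
  constructor
  · rintro ⟨h1, h2⟩ φ hφ
    -- restrictions
    set φ₁ : A₁ →ₗ[F] A₁ →ₗ[F] F :=
      ((φ.comp (LinearMap.inl F A₁ A₂)).compl₂ (LinearMap.inl F A₁ A₂)) with hφ₁def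
    set φ₂ : A₂ →ₗ[F] A₂ →ₗ[F] F :=
      ((φ.comp (LinearMap.inr F A₁ A₂)).compl₂ (LinearMap.inr F A₁ A₂)) with hφ₂def
    obtain ⟨τ₁, τ₂, hτ⟩ := h1 φ₁ (by
      intro x y hxy hyx
      apply hφ
      · ext <;> simp [hxy]
      · ext <;> simp [hyx])
    obtain ⟨σ₁, σ₂, hσ⟩ := h2 φ₂ (by
      intro x y hxy hyx
      apply hφ
      · ext <;> simp [hxy]
      · ext <;> simp [hyx])
    refine ⟨τ₁.comp (LinearMap.fst F A₁ A₂) + σ₁.comp (LinearMap.snd F A₁ A₂),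
        τ₂.comp (LinearMap.fst F A₁ A₂) + σ₂.comp (LinearMap.snd F A₁ A₂), ?_⟩
    intro x y
    have hx : x = (x.1, 0) + (0, x.2) := by ext <;> simp
    have hy : y = (y.1, 0) + (0, y.2) := by ext <;> simp
    have cross1 : φ (x.1, 0) (0, y.2) = 0 := by
      apply hφ <;> ext <;> simp
    have cross2 : φ (0, x.2) (y.1, 0) = 0 := by
      apply hφ <;> ext <;> simp
    have expand : φ x y = φ (x.1, 0) (y.1, 0) + φ (0, x.2) (0, y.2) := by
      conv_lhs => rw [hx, hy]
      simp only [map_add, LinearMap.add_apply, cross1, cross2, add_zero, zero_add]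
    have e1 : φ (x.1, 0) (y.1, 0) = φ₁ x.1 y.1 := by simp [hφ₁def]
    have e2 : φ (0, x.2) (0, y.2) = φ₂ x.2 y.2 := by simp [hφ₂def]
    rw [expand, e1, e2, hτ, hσ]
    simp [Prod.mul_def]
    ring
  · intro h
    constructor
    · intro φ hφ
      obtain ⟨τ₁, τ₂, hτ⟩ := h ((φ.comp (LinearMap.fst F A₁ A₂)).compl₂
          (LinearMap.fst F A₁ A₂)) (by
        intro x y hxy hyx
        simp only [LinearMap.compl₂_apply, LinearMap.comp_apply, LinearMap.fst_apply]
        exact hφ _ _ (congrArg Prod.fst hxy) (congrArg Prod.fst hyx))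
      refine ⟨τ₁.comp (LinearMap.inl F A₁ A₂), τ₂.comp (LinearMap.inl F A₁ A₂), ?_⟩
      intro x y
      have := hτ (x, 0) (y, 0)
      simpa [Prod.mul_def] using this
    · intro φ hφ
      obtain ⟨τ₁, τ₂, hτ⟩ := h ((φ.comp (LinearMap.snd F A₁ A₂)).compl₂
          (LinearMap.snd F A₁ A₂)) (by
        intro x y hxy hyx
        simp only [LinearMap.compl₂_apply, LinearMap.comp_apply, LinearMap.snd_apply]
        exact hφ _ _ (congrArg Prod.snd hxy) (congrArg Prod.snd hyx))
      refine ⟨τ₁.comp (LinearMap.inr F A₁ A₂), τ₂.comp (LinearMap.inr F A₁ A₂), ?_⟩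
      intro x y
      have := hτ (0, x) (0, y)
      simpa [Prod.mul_def] using this
end

section
/- Let A be a zpd algebra. If every derivation from A to the A-bimodule A* (the dual space with module actions (x·f)(y) = f(yx) and (f·x)(y) = f(xy)) is inner, then A is 2-zpd. -/
theorem inner_derivations_to_dual_imp_two_sided_zpd (F A : Type*) [Field F] [Ring A]
    [Algebra F A] (hzpd : IsZpd F A)
    (hinner : ∀ δ : A →ₗ[F] Module.Dual F A,
      (∀ x y z : A, δ (x * y) z = δ x (y * z) + δ y (z * x)) →
      ∃ f : Module.Dual F A, ∀ x z : A, δ x z = f (z * x) - f (x * z)) :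
    Is2Zpd F A := by
  intro φ hφ
  -- Lemma A : if y * z = 0 then φ (x*y) z = φ y (z*x) for all x
  have lemA : ∀ y z : A, y * z = 0 → ∀ x : A, φ (x * y) z = φ y (z * x) := by
    intro y z hyz x
    set β : A →ₗ[F] A →ₗ[F] F := LinearMap.mk₂ F (fun a b => φ (b * y) (z * a))
      (by intro a a' b; simp [mul_add])
      (by intro c a b; simp [mul_smul_comm])
      (by intro a b b'; simp [add_mul])
      (by intro c a b; simp [smul_mul_assoc]) with hβdef
    obtain ⟨τ, hτ⟩ := hzpd β (by
      intro a b hab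
      have h1 : (b * y) * (z * a) = 0 := by
        rw [mul_assoc, ← mul_assoc y z a, hyz, zero_mul, mul_zero]
      have h2 : (z * a) * (b * y) = 0 := by
        rw [mul_assoc, ← mul_assoc a b y, hab, zero_mul, mul_zero]
      simpa [hβdef] using hφ (b * y) (z * a) h1 h2)
    have e1 := hτ x 1
    have e2 := hτ 1 x
    simp [hβdef] at e1 e2
    rw [e2, ← e1]
  -- Step 2
  have step2 : ∀ x y z : A,
      φ (x * y) z - φ y (z * x) = φ x (y * z) - φ 1 (y * z * x) := by
    intro x y z
    set B : A →ₗ[F] A →ₗ[F] F := LinearMap.mk₂ F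
        (fun u v => φ (x * u) v - φ u (v * x))
      (by intro a a' b; simp [mul_add, add_mul]; ring)
      (by intro c a b; simp [mul_smul_comm, smul_mul_assoc, smul_sub]; ring)
      (by intro a b b'; simp [mul_add, add_mul]; ring)
      (by intro c a b; simp [mul_smul_comm, smul_mul_assoc, smul_sub]; ring) with hBdef
    obtain ⟨τ, hτ⟩ := hzpd B (by
      intro u v huv
      have := lemA u v huv x
      simp [hBdef, this])
    have e1 := hτ y z
    have e2 := hτ 1 (y * z)
    simp [hBdef] at e1 e2
    rw [e1, e2]
  -- The derivation δ x z = φ x z - φ 1 (z * x)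
  set δ : A →ₗ[F] Module.Dual F A := LinearMap.mk₂ F
      (fun u v => φ u v - φ 1 (v * u))
    (by intro a a' b; simp [mul_add, add_mul]; ring)
    (by intro c a b; simp [mul_smul_comm, smul_mul_assoc, smul_sub]; ring)
    (by intro a b b'; simp [mul_add, add_mul]; ring)
    (by intro c a b; simp [mul_smul_comm, smul_mul_assoc, smul_sub]; ring) with hδdef
  obtain ⟨f, hf⟩ := hinner δ (by
    intro x y z
    have h := step2 x y z
    simp only [hδdef, LinearMap.mk₂_apply]
    have hassoc : z * (x * y) = z * x * y := (mul_assoc z x y).symm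
    rw [hassoc]
    linear_combination h)
  refine ⟨-f, φ 1 + f, ?_⟩
  intro x y
  have h := hf x y
  simp only [hδdef, LinearMap.mk₂_apply] at h
  simp only [LinearMap.neg_apply, LinearMap.add_apply]
  linear_combination h
end

section
/- Let A be a zpd algebra and φ: A × A → F a bilinear functional vanishing whenever xy = yx = 0. Define ψ(x,y) = φ(x,y) − φ(xy,1) and δ: A → A* by δ(y)(x) = ψ(x,y). Then δ is a derivation from A to the bimodule A*, i.e., δ(yw) = δ(y)·w + y·δ(w) for all y, w ∈ A. -/
theorem psi_is_derivation (F A : Type*) [Field F] [Ring A] [Algebra F A]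
    (hzpd : IsZpd F A) (φ : A →ₗ[F] A →ₗ[F] F)
    (hφ : ∀ x y : A, x * y = 0 → y * x = 0 → φ x y = 0) :
    ∀ x y w : A,
      (φ x (y * w) - φ (x * (y * w)) 1) =
        (φ (w * x) y - φ (w * x * y) 1) + (φ (x * y) w - φ (x * y * w) 1) := by
  -- Key lemma: a * b = 0 → φ (w*a) b = φ a (b*w)
  have key : ∀ a b : A, a * b = 0 → ∀ w : A, φ (w * a) b = φ a (b * w) := by
    intro a b hab
    let Φ : A →ₗ[F] A →ₗ[F] F := LinearMap.mk₂ F (fun u v => φ (v * a) (b * u))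
      (fun u₁ u₂ v => by simp [mul_add])
      (fun c u v => by simp [mul_smul_comm])
      (fun u v₁ v₂ => by simp [add_mul])
      (fun c u v => by simp [smul_mul_assoc])
    have hΦ : ∀ u v : A, u * v = 0 → Φ u v = 0 := by
      intro u v huv
      have e1 : (v * a) * (b * u) = v * (a * b) * u := by noncomm_ring
      have e2 : (b * u) * (v * a) = b * (u * v) * a := by noncomm_ring
      simp only [Φ, LinearMap.mk₂_apply]
      apply hφ
      · rw [e1, hab]; simp
      · rw [e2, huv]; simp
    obtain ⟨τ, hτ⟩ := hzpd Φ hΦ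
    intro w
    have h1 := hτ 1 w
    have h2 := hτ w 1
    simp only [Φ, LinearMap.mk₂_apply, one_mul, mul_one] at h1 h2
    rw [h1, h2]
  intro x y w
  -- defect bilinear map
  let B : A →ₗ[F] A →ₗ[F] F := LinearMap.mk₂ F
    (fun x y => φ (x * y) w + φ (w * x) y - φ x (y * w) - φ (w * x * y) 1)
    (fun x₁ x₂ y => by simp [add_mul, mul_add]; ring)
    (fun c x y => by simp [smul_mul_assoc, mul_smul_comm]; ring)
    (fun x y₁ y₂ => by simp [add_mul, mul_add]; ring)
    (fun c x y => by simp [smul_mul_assoc, mul_smul_comm]; ring)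
  have hB : ∀ x y : A, x * y = 0 → B x y = 0 := by
    intro x y hxy
    simp only [B, LinearMap.mk₂_apply]
    have h1 : w * x * y = w * (x * y) := by rw [mul_assoc]
    rw [hxy, h1, hxy, key x y hxy w]
    simp
  obtain ⟨τ, hτ⟩ := hzpd B hB
  have hτ0 : ∀ z : A, τ z = 0 := by
    intro z
    have := hτ z 1
    simp only [B, LinearMap.mk₂_apply, mul_one, one_mul] at this
    linear_combination -this
  have hB0 := hτ x y
  rw [hτ0] at hB0
  simp only [B, LinearMap.mk₂_apply] at hB0
  have hxyw : x * (y * w) = x * y * w := by rw [mul_assoc]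
  rw [hxyw]
  linear_combination -hB0
end

section
/- Let A be a 2-zpd algebra, M an A-bimodule, and Θ the linear span of elements am with a ∈ A, m ∈ M and ama = 0. Then every derivation δ: A → M satisfies δ(A) ⊆ Θ. -/
open scoped TensorProduct

theorem Is2Zpd.one_tmul_sub_tmul_one_mem_span {F A : Type*} [Field F] [Ring A] [Algebra F A]
    (h : Is2Zpd F A) (w : A) :
    (1 : A) ⊗ₜ[F] w - w ⊗ₜ[F] (1 : A) ∈
      Submodule.span F {t : A ⊗[F] A | ∃ x y : A, x * y = 0 ∧ y * x = 0 ∧ t = x ⊗ₜ[F] y} := by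
  rw [← Subspace.forall_mem_dualAnnihilator_apply_eq_zero_iff]
  intro f hf
  rw [Submodule.mem_dualAnnihilator] at hf
  obtain ⟨τ₁, τ₂, hτ⟩ := h ((TensorProduct.mk F A A).compr₂ f) fun x y hxy hyx =>
    hf _ (Submodule.subset_span ⟨x, y, hxy, hyx, rfl⟩)
  have h1 := hτ 1 w
  have h2 := hτ w 1
  simp only [LinearMap.compr₂_apply, TensorProduct.mk_apply, one_mul, mul_one] at h1 h2
  rw [map_sub, h1, h2, add_comm, sub_self]

section Bimodule

variable {F A M : Type*} [CommRing F] [Ring A] [Algebra F A] [AddCommGroup M] [Module F M]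
  {l : A →ₐ[F] Module.End F M} {r : Aᵐᵒᵖ →ₐ[F] Module.End F M} {δ : A →ₗ[F] M}

theorem map_one_eq_zero_of_leibniz
    (hδ : ∀ x y : A, δ (x * y) = l x (δ y) + r (MulOpposite.op y) (δ x)) : δ 1 = 0 := by
  have h := hδ 1 1
  simp only [mul_one, map_one, Module.End.one_apply, MulOpposite.op_one] at h
  exact left_eq_add.mp h

theorem mul_derivation_mul_eq_zero
    (hlr : ∀ (a : A) (b : Aᵐᵒᵖ) (m : M), l a (r b m) = r b (l a m))
    (hδ : ∀ x y : A, δ (x * y) = l x (δ y) + r (MulOpposite.op y) (δ x))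
    {x y : A} (hxy : x * y = 0) (hyx : y * x = 0) :
    r (MulOpposite.op x) (l x (δ y)) = 0 := by
  have hxyx : l x (l y (δ x)) = 0 := by
    rw [← Module.End.mul_apply, ← map_mul, hxy, map_zero, LinearMap.zero_apply]
  have h := hδ x (y * x)
  rw [hδ y x, hyx, mul_zero, map_zero, MulOpposite.op_zero, map_zero, LinearMap.zero_apply,
    add_zero, map_add, hxyx, zero_add, hlr] at h
  exact h.symm

end Bimodule

theorem two_sided_zpd_derivation_range (F A : Type*) [Field F] [Ring A] [Algebra F A]
    (h : Is2Zpd F A) (M : Type*) [AddCommGroup M] [Module F M]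
    (l : A →ₐ[F] Module.End F M) (r : Aᵐᵒᵖ →ₐ[F] Module.End F M)
    (hlr : ∀ (a : A) (b : Aᵐᵒᵖ) (m : M), l a (r b m) = r b (l a m))
    (δ : A →ₗ[F] M)
    (hδ : ∀ x y : A, δ (x * y) = l x (δ y) + r (MulOpposite.op y) (δ x)) :
    ∀ w : A, δ w ∈ Submodule.span F
      {v : M | ∃ (a : A) (m : M), v = l a m ∧ r (MulOpposite.op a) (l a m) = 0} := by
  intro w
  -- `β (x ⊗ y) = x δ(y)`
  let β : A ⊗[F] A →ₗ[F] M := TensorProduct.lift ((LinearMap.lcomp F M δ).comp l.toLinearMap)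
  have hβ : δ w = β ((1 : A) ⊗ₜ[F] w - w ⊗ₜ[F] (1 : A)) := by
    simp [β, map_one_eq_zero_of_leibniz hδ]
  rw [hβ]
  refine Submodule.span_le.mpr ?_ (Submodule.map_span β _ ▸
    Submodule.mem_map_of_mem (h.one_tmul_sub_tmul_one_mem_span w))
  rintro _ ⟨_, ⟨x, y, hxy, hyx, rfl⟩, rfl⟩
  exact Submodule.subset_span ⟨x, δ y, rfl, mul_derivation_mul_eq_zero hlr hδ hxy hyx⟩
end

section
/- If A is a 2-zpd algebra, then every derivation δ: A → A has image contained in the linear span of square-zero elements of A. -/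
/-!
Let `f` be a linear functional vanishing on all square-zero elements and put
`φ(x, y) = f (δ x * y)`. If `x * y = y * x = 0`, the Leibniz rule gives `y * δ x = -(δ y * x)`,
so `(δ x * y)² = -δ x * δ y * x * y = 0`; hence `φ` vanishes on two-sided zero products
and, `A` being 2-zpd, `φ(x, y) = τ₁(x y) + τ₂(y x)`. In particular `φ(w, 1) = φ(1, w)`,
i.e. `f (δ w) = f (δ 1 * w) = 0`.
-/

theorem Submodule.mem_span_of_forall_dual_eq_zero {K V : Type*} [Field K] [AddCommGroup V]
    [Module K V] {S : Set V} {v : V}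
    (h : ∀ f : Module.Dual K V, (∀ s ∈ S, f s = 0) → f v = 0) :
    v ∈ Submodule.span K S := by
  rw [← Subspace.forall_mem_dualAnnihilator_apply_eq_zero_iff]
  exact fun f hf ↦ h f fun s hs ↦ (Submodule.mem_dualAnnihilator f).1 hf s (subset_span hs)

section Leibniz

variable {A : Type*} [Ring A] {δ : A → A} (hδ : ∀ x y : A, δ (x * y) = δ x * y + x * δ y)
include hδ

theorem map_one_eq_zero_of_leibniz_s13 : δ 1 = 0 := by
  simpa using hδ 1 1

theorem mul_self_eq_zero_of_leibniz {x y : A} (hxy : x * y = 0) (hyx : y * x = 0) :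
    δ x * y * (δ x * y) = 0 := by
  have hδ0 : δ 0 = 0 := by simpa using hδ 0 0
  have hyδx : y * δ x = -(δ y * x) :=
    eq_neg_of_add_eq_zero_right (by rw [← hδ, hyx, hδ0])
  calc δ x * y * (δ x * y)
      = δ x * (y * δ x) * y := by noncomm_ring
    _ = -(δ x * δ y * (x * y)) := by rw [hyδx]; noncomm_ring
    _ = 0 := by rw [hxy, mul_zero, neg_zero]

end Leibniz

theorem Is2Zpd.apply_one_left_eq_apply_one_right {F A : Type*} [Field F] [Ring A]
    [Algebra F A] (h : Is2Zpd F A) {φ : A →ₗ[F] A →ₗ[F] F}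
    (hφ : ∀ x y : A, x * y = 0 → y * x = 0 → φ x y = 0) (w : A) : φ 1 w = φ w 1 := by
  obtain ⟨τ₁, τ₂, hτ⟩ := h φ hφ
  rw [hτ, hτ, one_mul, mul_one, add_comm]

theorem two_sided_zpd_derivation_square_zero (F A : Type*) [Field F] [Ring A]
    [Algebra F A] (h : Is2Zpd F A) (δ : A →ₗ[F] A)
    (hδ : ∀ x y : A, δ (x * y) = δ x * y + x * δ y) :
    ∀ w : A, δ w ∈ Submodule.span F {a : A | a * a = 0} := by
  intro w
  refine Submodule.mem_span_of_forall_dual_eq_zero fun f hf ↦ ?_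
  let φ : A →ₗ[F] A →ₗ[F] F := ((LinearMap.mul F A).comp δ).compr₂ f
  have hφ : ∀ x y : A, x * y = 0 → y * x = 0 → φ x y = 0 :=
    fun x y hxy hyx ↦ hf _ (mul_self_eq_zero_of_leibniz hδ hxy hyx)
  simpa [φ, map_one_eq_zero_of_leibniz_s13 hδ] using (h.apply_one_left_eq_apply_one_right hφ w).symm
end

section
/- If A is a 2-zpd algebra, then every inner derivation u ↦ uw − wu of A can be written as a finite sum Σᵢ L_{xᵢ}R_{yᵢ} of composites of left and right multiplications, where xᵢ, yᵢ ∈ A satisfy xᵢyᵢ = yᵢxᵢ = 0 for every i. -/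
/-!
Linear functionals on `A ⊗ A` are bilinear forms on `A`. One vanishing on the tensors `x ⊗ y`
with `xy = yx = 0` is, by 2-zpd, of the form `τ₁(xy) + τ₂(yx)`, so it takes the same value
`τ₁ w + τ₂ w` at `1 ⊗ w` and `w ⊗ 1`. Hence `1 ⊗ w - w ⊗ 1` lies in the span of those tensors,
and applying the linear map `x ⊗ y ↦ x u y` to a representation `∑ xᵢ ⊗ yᵢ` gives
`uw - wu = ∑ xᵢ u yᵢ`.
-/

open TensorProduct

section

variable (F A : Type*) [Field F] [Ring A] [Algebra F A]

def twoSidedZeroProductSpan : Submodule F (A ⊗[F] A) :=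
  Submodule.span F {t | ∃ x y : A, x * y = 0 ∧ y * x = 0 ∧ x ⊗ₜ[F] y = t}

variable {F A}

theorem exists_sum_tmul_of_mem_twoSidedZeroProductSpan {t : A ⊗[F] A}
    (ht : t ∈ twoSidedZeroProductSpan F A) :
    ∃ (n : ℕ) (x y : Fin n → A),
      (∀ i, x i * y i = 0 ∧ y i * x i = 0) ∧ t = ∑ i, x i ⊗ₜ[F] y i := by
  obtain ⟨n, c, g, rfl⟩ := Submodule.mem_span_set'.mp ht
  choose x y hxy hyx hg using fun i => (g i).2
  refine ⟨n, fun i => c i • x i, y, fun i => ⟨?_, ?_⟩, ?_⟩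
  · rw [smul_mul_assoc, hxy, smul_zero]
  · rw [mul_smul_comm, hyx, smul_zero]
  · simp only [← hg, smul_tmul']

theorem Is2Zpd.one_tmul_sub_tmul_one_mem (h : Is2Zpd F A) (w : A) :
    (1 : A) ⊗ₜ[F] w - w ⊗ₜ[F] (1 : A) ∈ twoSidedZeroProductSpan F A := by
  rw [← Subspace.forall_mem_dualAnnihilator_apply_eq_zero_iff]
  intro f hf
  obtain ⟨τ₁, τ₂, hτ⟩ := h ((TensorProduct.mk F A A).compr₂ f) fun x y hxy hyx =>
    (Submodule.mem_dualAnnihilator f).mp hf _ (Submodule.subset_span ⟨x, y, hxy, hyx, rfl⟩)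
  have h1 : f ((1 : A) ⊗ₜ[F] w) = τ₁ w + τ₂ w := by simpa using hτ 1 w
  have h2 : f (w ⊗ₜ[F] (1 : A)) = τ₁ w + τ₂ w := by simpa [add_comm] using hτ w 1
  rw [map_sub, h1, h2, sub_self]

variable (F) in
def sandwichMap (u : A) : A ⊗[F] A →ₗ[F] A :=
  TensorProduct.lift ((LinearMap.mul F A).comp (LinearMap.mulRight F u))

@[simp]
theorem sandwichMap_tmul (u x y : A) : sandwichMap F u (x ⊗ₜ[F] y) = x * u * y :=
  rfl

theorem sandwichMap_one_tmul_sub_tmul_one (u w : A) :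
    sandwichMap F u ((1 : A) ⊗ₜ[F] w - w ⊗ₜ[F] (1 : A)) = u * w - w * u := by
  simp

end

theorem two_sided_zpd_inner_derivation_form (F A : Type*) [Field F] [Ring A]
    [Algebra F A] (h : Is2Zpd F A) :
    ∀ w : A, ∃ (n : ℕ) (x y : Fin n → A),
      (∀ i, x i * y i = 0 ∧ y i * x i = 0) ∧
      ∀ u : A, u * w - w * u = ∑ i, x i * u * y i := by
  intro w
  obtain ⟨n, x, y, hxy, hsum⟩ :=
    exists_sum_tmul_of_mem_twoSidedZeroProductSpan (h.one_tmul_sub_tmul_one_mem w)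
  refine ⟨n, x, y, hxy, fun u => ?_⟩
  rw [← sandwichMap_one_tmul_sub_tmul_one (F := F), hsum, map_sum]
  simp only [sandwichMap_tmul]
end

section
/- Let A₀ be a unital algebra not equal to the linear span of its square-zero elements, and let C = F[X]/(Xⁿ) with n ≥ 2. Then the algebra A = A₀ ⊗ C is not 2-zpd. -/
open Polynomial TensorProduct DualNumber TrivSqZeroExt

theorem DualNumber.snd_mul_fst_mul_self_eq_zero {R : Type*} [Ring R] {u v : R[ε]}
    (huv : u * v = 0) (hvu : v * u = 0) : snd u * fst v * (snd u * fst v) = 0 := by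
  have hfst : fst u * fst v = 0 := by simpa using congrArg fst huv
  have hsnd : fst v * snd u = -(snd v * fst u) :=
    eq_neg_of_add_eq_zero_left (by simpa [snd_mul] using congrArg snd hvu)
  calc snd u * fst v * (snd u * fst v) = snd u * (fst v * snd u) * fst v := by noncomm_ring
    _ = -(snd u * snd v * (fst u * fst v)) := by rw [hsnd]; noncomm_ring
    _ = 0 := by rw [hfst, mul_zero, neg_zero]

section Is2Zpd

variable {F A : Type*} [Field F] [Ring A] [Algebra F A]

theorem Is2Zpd.apply_one_left (hA : Is2Zpd F A) {φ : A →ₗ[F] A →ₗ[F] F}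
    (hφ : ∀ x y : A, x * y = 0 → y * x = 0 → φ x y = 0) (x : A) : φ 1 x = φ x 1 := by
  obtain ⟨τ₁, τ₂, hτ⟩ := hA φ hφ
  simp only [hτ, one_mul, mul_one]

theorem Is2Zpd.snd_mem_span_mul_self_eq_zero {R : Type*} [Ring R] [Algebra F R]
    (hA : Is2Zpd F A) (ψ : A →ₐ[F] R[ε]) (x : A) :
    snd (ψ x) ∈ Submodule.span F {r : R | r * r = 0} := by
  by_contra hx
  obtain ⟨f, hfx, hf⟩ := Submodule.exists_dual_map_eq_bot_of_notMem hx inferInstance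
  have hf_sq : ∀ r : R, r * r = 0 → f r = 0 := fun r hr =>
    LinearMap.le_ker_iff_map.2 hf (Submodule.subset_span hr)
  let Φ : A →ₗ[F] A →ₗ[F] F := ((LinearMap.mul F R).compr₂ f).compl₁₂
    ((sndHom R R).restrictScalars F ∘ₗ ψ.toLinearMap) ((fstHom F R R).toLinearMap ∘ₗ ψ.toLinearMap)
  have hΦ : ∀ x y : A, x * y = 0 → y * x = 0 → Φ x y = 0 := fun x y hxy hyx =>
    hf_sq _ (snd_mul_fst_mul_self_eq_zero (u := ψ x) (v := ψ y)
      (by rw [← map_mul, hxy, map_zero]) (by rw [← map_mul, hyx, map_zero]))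
  apply hfx
  calc f (snd (ψ x)) = Φ x 1 := by simp [Φ]
    _ = Φ 1 x := (hA.apply_one_left hΦ x).symm
    _ = 0 := by simp [Φ]

end Is2Zpd

section QuotXPow

variable (F : Type*) [Field F] {n : ℕ} (hn : 2 ≤ n)

noncomputable def quotXPowToDualNumber (R : Type*) [Ring R] [Algebra F R] :
    F[X] ⧸ Ideal.span {(X : F[X]) ^ n} →ₐ[F] R[ε] :=
  Ideal.Quotient.liftₐ _ (aeval ε) fun p hp => by
    obtain ⟨q, rfl⟩ := Ideal.mem_span_singleton'.1 hp
    rw [map_mul, map_pow, aeval_X, pow_eq_zero_of_le hn (by rw [sq, eps_mul_eps]), mul_zero]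

theorem quotXPowToDualNumber_mk (R : Type*) [Ring R] [Algebra F R] (p : F[X]) :
    quotXPowToDualNumber F hn R (Ideal.Quotient.mk _ p) = aeval ε p :=
  rfl

variable (A₀ : Type*) [Ring A₀] [Algebra F A₀]

noncomputable def tensorQuotXPowToDualNumber :
    A₀ ⊗[F] (F[X] ⧸ Ideal.span {(X : F[X]) ^ n}) →ₐ[F] A₀[ε] :=
  Algebra.TensorProduct.lift (inlAlgHom F A₀ A₀) (quotXPowToDualNumber F hn A₀) fun _ c => by
    obtain ⟨p, rfl⟩ := Ideal.Quotient.mk_surjective c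
    rw [quotXPowToDualNumber_mk]
    exact Algebra.commute_of_mem_adjoin_singleton_of_commute (aeval_mem_adjoin_singleton F ε)
      (commute_eps_right _)

theorem snd_tensorQuotXPowToDualNumber_tmul_X (a : A₀) :
    snd (tensorQuotXPowToDualNumber F hn A₀ (a ⊗ₜ Ideal.Quotient.mk _ X)) = a := by
  simp [tensorQuotXPowToDualNumber, quotXPowToDualNumber_mk]

end QuotXPow

open TensorProduct in
theorem tensor_nilpotent_not_two_sided_zpd (F A₀ : Type*) [Field F] [Ring A₀]
    [Algebra F A₀]
    (hA₀ : Submodule.span F {a : A₀ | a * a = 0} ≠ ⊤) (n : ℕ) (hn : 2 ≤ n) :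
    ¬ Is2Zpd F (A₀ ⊗[F] (Polynomial F ⧸ Ideal.span {(Polynomial.X : Polynomial F) ^ n})) := by
  intro hA
  obtain ⟨a, ha⟩ : ∃ a : A₀, a ∉ Submodule.span F {a : A₀ | a * a = 0} := by
    contrapose! hA₀
    exact Submodule.eq_top_iff'.2 hA₀
  apply ha
  simpa only [snd_tensorQuotXPowToDualNumber_tmul_X] using
    hA.snd_mem_span_mul_self_eq_zero (tensorQuotXPowToDualNumber F hn A₀)
      (a ⊗ₜ Ideal.Quotient.mk _ X)
end

section
/- Let A be a separable unital algebra that is also zpd. Then A is 2-zpd. More precisely, if Σᵢ pᵢ⊗qᵢ ∈ A⊗A satisfies Σᵢ pᵢqᵢ = 1 and Σᵢ xpᵢ⊗qᵢ = Σᵢ pᵢ⊗qᵢx for all x ∈ A, then every bilinear functional φ vanishing on two-sided zero products satisfies φ(x,y) = Σᵢ φ(pᵢ, qᵢxy) − Σᵢ φ(pᵢ, qᵢyx) + φ(1, yx) for all x, y ∈ A. -/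
private lemma zpd_lemma1 {F A : Type*} [Field F] [Ring A] [Algebra F A]
    (hzpd : IsZpd F A) (φ : A →ₗ[F] A →ₗ[F] F)
    (hφ : ∀ x y : A, x * y = 0 → y * x = 0 → φ x y = 0)
    {x y : A} (hxy : x * y = 0) (a b : A) :
    φ (a * x) (y * b) = φ x (y * (b * a)) := by
  set ρ : A →ₗ[F] A →ₗ[F] F := LinearMap.mk₂ F (fun v u => φ (u * x) (y * v))
    (fun v v' u => by simp [mul_add])
    (fun c v u => by simp [mul_smul_comm])
    (fun v u u' => by simp [add_mul])
    (fun c v u => by simp [smul_mul_assoc]) with hρ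
  obtain ⟨τ, hτ⟩ := hzpd ρ (by
    intro v u hvu
    have h1 : (u * x) * (y * v) = 0 := by
      rw [mul_assoc, ← mul_assoc x y v, hxy, zero_mul, mul_zero]
    have h2 : (y * v) * (u * x) = 0 := by
      rw [mul_assoc, ← mul_assoc v u x, hvu, zero_mul, mul_zero]
    simpa [hρ] using hφ _ _ h1 h2)
  have e1 : φ (a * x) (y * b) = τ (b * a) := by simpa [hρ] using hτ b a
  have e2 : φ (1 * x) (y * (b * a)) = τ ((b * a) * 1) := by simpa [hρ] using hτ (b * a) 1
  simp only [one_mul, mul_one] at e2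
  rw [e1, e2]

private lemma zpd_key {F A : Type*} [Field F] [Ring A] [Algebra F A]
    (hzpd : IsZpd F A) (φ : A →ₗ[F] A →ₗ[F] F)
    (hφ : ∀ x y : A, x * y = 0 → y * x = 0 → φ x y = 0)
    (w x y z : A) :
    φ (w * (x * y)) z - φ (x * y) (z * w)
      = φ (w * x) (y * z) - φ x ((y * z) * w) := by
  set σ : A →ₗ[F] A →ₗ[F] F := LinearMap.mk₂ F (fun a b => φ (w * a) b - φ a (b * w))
    (fun a a' b => by simp [mul_add, add_mul]; ring)
    (fun c a b => by simp [mul_smul_comm, smul_mul_assoc, smul_sub]; ring)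
    (fun a b b' => by simp [mul_add, add_mul]; ring)
    (fun c a b => by simp [mul_smul_comm, smul_mul_assoc, smul_sub]; ring) with hσ
  obtain ⟨τ, hτ⟩ := hzpd σ (by
    intro a b hab
    have := zpd_lemma1 hzpd φ hφ hab w (1 : A)
    simp only [mul_one, one_mul] at this
    simp [hσ, this])
  have e1 : σ (x * y) z = τ ((x * y) * z) := hτ (x * y) z
  have e2 : σ x (y * z) = τ (x * (y * z)) := hτ x (y * z)
  rw [mul_assoc] at e1
  have : σ (x * y) z = σ x (y * z) := by rw [e1, e2]
  simpa [hσ] using this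

open TensorProduct in
theorem separable_zpd_implies_two_sided_zpd (F A : Type*) [Field F] [Ring A]
    [Algebra F A] (hzpd : IsZpd F A)
    (m : ℕ) (p q : Fin m → A) (hpq : ∑ i, p i * q i = 1)
    (hsep : ∀ x : A, ∑ i, (x * p i) ⊗ₜ[F] q i = ∑ i, p i ⊗ₜ[F] (q i * x)) :
    Is2Zpd F A ∧
      ∀ φ : A →ₗ[F] A →ₗ[F] F, (∀ x y : A, x * y = 0 → y * x = 0 → φ x y = 0) →
        ∀ x y : A, φ x y =
          ∑ i, φ (p i) (q i * (x * y)) - ∑ i, φ (p i) (q i * (y * x)) + φ 1 (y * x) := by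
  have main : ∀ φ : A →ₗ[F] A →ₗ[F] F,
      (∀ x y : A, x * y = 0 → y * x = 0 → φ x y = 0) →
      ∀ x y : A, φ x y =
        ∑ i, φ (p i) (q i * (x * y)) - ∑ i, φ (p i) (q i * (y * x)) + φ 1 (y * x) := by
    intro φ hφ x y
    have hkey : ∀ i : Fin m,
        φ (x * (p i * q i)) y - φ (p i * q i) (y * x)
          = φ (x * p i) (q i * y) - φ (p i) ((q i * y) * x) :=
      fun i => zpd_key hzpd φ hφ x (p i) (q i) y
    have hsum : ∑ i, (φ (x * (p i * q i)) y - φ (p i * q i) (y * x))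
        = ∑ i, (φ (x * p i) (q i * y) - φ (p i) ((q i * y) * x)) :=
      Finset.sum_congr rfl (fun i _ => hkey i)
    have e1 : ∑ i, φ (x * (p i * q i)) y = φ x y := by
      have : φ (x * ∑ i, p i * q i) y = ∑ i, φ (x * (p i * q i)) y := by
        rw [Finset.mul_sum, map_sum, LinearMap.sum_apply]
      rw [← this, hpq, mul_one]
    have e2 : ∑ i, φ (p i * q i) (y * x) = φ 1 (y * x) := by
      have : φ (∑ i, p i * q i) (y * x) = ∑ i, φ (p i * q i) (y * x) := by
        rw [map_sum, LinearMap.sum_apply]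
      rw [← this, hpq]
    have e3 : ∑ i, φ (x * p i) (q i * y) = ∑ i, φ (p i) (q i * (x * y)) := by
      set L : A ⊗[F] A →ₗ[F] F :=
        TensorProduct.lift ((LinearMap.lcomp F F (LinearMap.mulRight F y)).comp φ) with hL
      have h := congrArg L (hsep x)
      simp only [map_sum, hL, TensorProduct.lift.tmul, LinearMap.comp_apply,
        LinearMap.lcomp_apply, LinearMap.mulRight_apply] at h
      rw [h]
      exact Finset.sum_congr rfl (fun i _ => by rw [mul_assoc])
    have e4 : ∑ i, φ (p i) ((q i * y) * x) = ∑ i, φ (p i) (q i * (y * x)) :=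
      Finset.sum_congr rfl (fun i _ => by rw [mul_assoc])
    rw [Finset.sum_sub_distrib, Finset.sum_sub_distrib, e1, e2, e3, e4] at hsum
    linear_combination hsum
  refine ⟨?_, main⟩
  intro φ hφ
  refine ⟨∑ i, (φ (p i)).comp (LinearMap.mulLeft F (q i)),
    φ 1 - ∑ i, (φ (p i)).comp (LinearMap.mulLeft F (q i)), fun x y => ?_⟩
  rw [main φ hφ x y]
  simp only [LinearMap.sum_apply, LinearMap.comp_apply, LinearMap.mulLeft_apply,
    LinearMap.sub_apply]
  ring
end

section
/- Let A be a finite-dimensional simple algebra that is not a division algebra. Then the linear span of square-zero elements of A equals the span of commutators [A,A]. -/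
/-!
A nonzero nonunit `a` of the von Neumann regular ring `A` gives, via `aba = a`, a nontrivial
idempotent `e = ab`. Elements of `eA(1-e) + (1-e)Ae` square to zero, commutators of square-zero
elements stay in their span, and every element is a sum of an element commuting with `e` and an
off-diagonal one. This leaves `[d, d']` with `d, d'` commuting with `e`: simplicity writes `1` as
a sum of products `ab` of off-diagonal elements, and `d(ab)d' - d'd(ab) = [da, bd'] + [b, d'da]`.
Conversely, `a² = 0` and `aba = a` give `a = (ab)a - a(ab)`.
-/

open scoped Pointwise

section SquareZeroSpan

variable (R A : Type*) [CommRing R] [Ring A] [Algebra R A]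

def squareZeroSpan : Submodule R A := Submodule.span R {a : A | a * a = 0}

variable {R A}

theorem mem_squareZeroSpan_of_mul_self_eq_zero {a : A} (ha : a * a = 0) :
    a ∈ squareZeroSpan R A :=
  Submodule.subset_span ha

-- `u := ab + a - bab - ba` squares to zero and `ab - ba = u - a + bab`.
theorem mul_sub_mul_mem_squareZeroSpan_of_mul_self_eq_zero {a b : A} (ha : a * a = 0)
    (hb : b * b = 0) : a * b - b * a ∈ squareZeroSpan R A := by
  have ha' : ∀ x : A, a * (a * x) = 0 := fun x => by rw [← mul_assoc, ha, zero_mul]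
  have hb' : ∀ x : A, b * (b * x) = 0 := fun x => by rw [← mul_assoc, hb, zero_mul]
  have hu : (a * b + a - b * a * b - b * a) * (a * b + a - b * a * b - b * a) = 0 := by
    simp only [sub_mul, mul_sub, add_mul, mul_add, mul_assoc, ha', hb', ha, mul_zero,
      sub_zero, add_zero, zero_add]
    abel
  have hbab : (b * a * b) * (b * a * b) = 0 := by simp only [mul_assoc, hb', mul_zero]
  have hsplit : a * b - b * a = (a * b + a - b * a * b - b * a) - a + b * a * b := by abel
  rw [hsplit]
  exact add_mem (sub_mem (mem_squareZeroSpan_of_mul_self_eq_zero hu)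
    (mem_squareZeroSpan_of_mul_self_eq_zero ha)) (mem_squareZeroSpan_of_mul_self_eq_zero hbab)

theorem mul_sub_mul_mem_squareZeroSpan {x y : A} (hx : x ∈ squareZeroSpan R A)
    (hy : y ∈ squareZeroSpan R A) : x * y - y * x ∈ squareZeroSpan R A := by
  let bracket : A →ₗ[R] A →ₗ[R] A := LinearMap.mul R A - (LinearMap.mul R A).flip
  have hle : Submodule.map₂ bracket (squareZeroSpan R A) (squareZeroSpan R A) ≤
      squareZeroSpan R A := by
    rw [squareZeroSpan, Submodule.map₂_span_span, Submodule.span_le]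
    rintro _ ⟨a, ha, b, hb, rfl⟩
    exact mul_sub_mul_mem_squareZeroSpan_of_mul_self_eq_zero ha hb
  exact hle (Submodule.apply_mem_map₂ bracket hx hy)

end SquareZeroSpan

section Peirce

variable {A : Type*} [Ring A]

-- For idempotent `e` this is the Peirce off-diagonal part `eA(1 - e) + (1 - e)Ae`.
def offDiag (e : A) : Set A := {z | e * z + z * e = z}

theorem mul_mul_one_sub_mem_offDiag {e : A} (he : IsIdempotentElem e) (x : A) :
    e * x * (1 - e) ∈ offDiag e := by
  simp only [offDiag, Set.mem_ofPred_eq, mul_sub, sub_mul, mul_one, mul_assoc, he.eq]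
  simp only [← mul_assoc, he.eq]
  abel

theorem one_sub_mul_mul_mem_offDiag {e : A} (he : IsIdempotentElem e) (x : A) :
    (1 - e) * x * e ∈ offDiag e := by
  simp only [offDiag, Set.mem_ofPred_eq, mul_sub, sub_mul, one_mul, mul_assoc, he.eq]
  simp only [← mul_assoc, he.eq]
  abel

theorem offDiag_one_sub (e : A) : offDiag (1 - e) = offDiag e := by
  ext z
  simp only [offDiag, Set.mem_ofPred_eq, sub_mul, mul_sub, one_mul, mul_one]
  constructor <;> intro h <;> linear_combination (norm := abel_nf) -h

theorem mul_mem_offDiag_of_commute_left {e d z : A} (hd : Commute e d) (hz : z ∈ offDiag e) :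
    d * z ∈ offDiag e := by
  change e * (d * z) + d * z * e = d * z
  rw [← mul_assoc, hd.eq, mul_assoc, mul_assoc, ← mul_add, hz]

theorem mul_mem_offDiag_of_commute_right {e d z : A} (hd : Commute e d) (hz : z ∈ offDiag e) :
    z * d ∈ offDiag e := by
  change e * (z * d) + z * d * e = z * d
  rw [mul_assoc z, ← hd.eq, ← mul_assoc, ← mul_assoc, ← add_mul, hz]

theorem exists_commute_add_mem_offDiag {e : A} (he : IsIdempotentElem e) (x : A) :
    ∃ d z, Commute e d ∧ z ∈ offDiag e ∧ x = d + z := by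
  refine ⟨e * x * e + (1 - e) * x * (1 - e), e * x * (1 - e) + (1 - e) * x * e, ?_, ?_, ?_⟩
  · have hl : e * (1 - e) = 0 := by rw [mul_sub, mul_one, he.eq, sub_self]
    have hr : (1 - e) * e = 0 := by rw [sub_mul, one_mul, he.eq, sub_self]
    calc e * (e * x * e + (1 - e) * x * (1 - e)) = e * x * e := by
          simp only [mul_add, ← mul_assoc, he.eq, hl, zero_mul, add_zero]
      _ = (e * x * e + (1 - e) * x * (1 - e)) * e := by
          simp only [add_mul, mul_assoc, he.eq, hr, mul_zero, add_zero]
  · have h₁ := mul_mul_one_sub_mem_offDiag he x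
    have h₂ := one_sub_mul_mul_mem_offDiag he x
    simp only [offDiag, Set.mem_ofPred_eq] at h₁ h₂ ⊢
    rw [mul_add, add_mul, add_add_add_comm, h₁, h₂]
  · noncomm_ring

variable {R : Type*} [CommRing R] [Algebra R A]

theorem mem_squareZeroSpan_of_mem_offDiag {e z : A} (he : IsIdempotentElem e)
    (hz : z ∈ offDiag e) : z ∈ squareZeroSpan R A := by
  have hz : e * z + z * e = z := hz
  have hcorner : e * z * e = 0 := by
    have h := congrArg (e * ·) hz
    simp only [mul_add, ← mul_assoc, he.eq] at h
    simpa using h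
  have hleft : (e * z) * (e * z) = 0 := by rw [← mul_assoc, hcorner, zero_mul]
  have hright : (z * e) * (z * e) = 0 := by rw [mul_assoc, ← mul_assoc e, hcorner, mul_zero]
  rw [← hz]
  exact add_mem (mem_squareZeroSpan_of_mul_self_eq_zero hleft)
    (mem_squareZeroSpan_of_mul_self_eq_zero hright)

end Peirce

section Commutator

variable {R A : Type*} [CommRing R] [Ring A] [Algebra R A] {e : A}

theorem mul_mul_sub_mul_mul_mem_squareZeroSpan (he : IsIdempotentElem e) {p q t : A}
    (hp : Commute e p) (hq : Commute e q)
    (ht : t ∈ AddSubgroup.closure (offDiag e * offDiag e)) :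
    p * t * q - q * p * t ∈ squareZeroSpan R A := by
  have hS {z : A} : z ∈ offDiag e → z ∈ squareZeroSpan R A :=
    mem_squareZeroSpan_of_mem_offDiag he
  induction ht using AddSubgroup.closure_induction with
  | mem t ht =>
    obtain ⟨a, ha, b, hb, rfl⟩ := ht
    have hsplit : p * (a * b) * q - q * p * (a * b) =
        (p * a * (b * q) - b * q * (p * a)) + (b * (q * p * a) - q * p * a * b) := by
      noncomm_ring
    rw [hsplit]
    exact add_mem
      (mul_sub_mul_mem_squareZeroSpan (hS (mul_mem_offDiag_of_commute_left hp ha))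
        (hS (mul_mem_offDiag_of_commute_right hq hb)))
      (mul_sub_mul_mem_squareZeroSpan (hS hb)
        (hS (mul_mem_offDiag_of_commute_left (hq.mul_right hp) ha)))
  | zero => simp
  | add t t' _ _ ht ht' =>
    have hsplit : p * (t + t') * q - q * p * (t + t') =
        (p * t * q - q * p * t) + (p * t' * q - q * p * t') := by noncomm_ring
    rw [hsplit]
    exact add_mem ht ht'
  | neg t _ ht =>
    have hneg : p * -t * q - q * p * -t = -(p * t * q - q * p * t) := by noncomm_ring
    rw [hneg]
    exact neg_mem ht

theorem mul_sub_mul_mem_squareZeroSpan_of_one_mem_closure (he : IsIdempotentElem e)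
    (h1 : (1 : A) ∈ AddSubgroup.closure (offDiag e * offDiag e)) (x y : A) :
    x * y - y * x ∈ squareZeroSpan R A := by
  have hS {z : A} : z ∈ offDiag e → z ∈ squareZeroSpan R A :=
    mem_squareZeroSpan_of_mem_offDiag he
  obtain ⟨d, z, hd, hz, rfl⟩ := exists_commute_add_mem_offDiag he x
  obtain ⟨d', z', hd', hz', rfl⟩ := exists_commute_add_mem_offDiag he y
  have hdiag : d * d' - d' * d ∈ squareZeroSpan R A := by
    simpa using mul_mul_sub_mul_mul_mem_squareZeroSpan he hd hd' h1
  have hsplit : (d + z) * (d' + z') - (d' + z') * (d + z) =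
      (d * d' - d' * d) + (d * z' - z' * d) + (z * d' - d' * z) + (z * z' - z' * z) := by
    noncomm_ring
  rw [hsplit]
  refine add_mem (add_mem (add_mem hdiag ?_) ?_) (mul_sub_mul_mem_squareZeroSpan (hS hz) (hS hz'))
  · exact sub_mem (hS (mul_mem_offDiag_of_commute_left hd hz'))
      (hS (mul_mem_offDiag_of_commute_right hd hz'))
  · exact sub_mem (hS (mul_mem_offDiag_of_commute_right hd' hz))
      (hS (mul_mem_offDiag_of_commute_left hd' hz))

end Commutator

section SimpleRing

variable {A : Type*} [Ring A] [IsSimpleRing A] {e : A}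

theorem mem_closure_offDiag_mul_offDiag (he : IsIdempotentElem e) (he1 : e ≠ 1) :
    e ∈ AddSubgroup.closure (offDiag e * offDiag e) := by
  have h1 : (1 : A) ∈ AddSubgroup.closure (Set.univ * {1 - e} * Set.univ) :=
    TwoSidedIdeal.mem_span_iff_mem_addSubgroup_closure.mp
      (IsSimpleRing.one_mem_of_ne_zero_mem _ (sub_ne_zero.mpr he1.symm)
        (TwoSidedIdeal.subset_span rfl))
  let corner : A →+ A := (AddMonoidHom.mulLeft e).comp (AddMonoidHom.mulRight e)
  have hcorner := AddSubgroup.mem_map_of_mem corner h1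
  rw [AddMonoidHom.map_closure] at hcorner
  have hone : corner 1 = e := by simp [corner, he.eq]
  rw [hone] at hcorner
  refine AddSubgroup.closure_mono ?_ hcorner
  rintro _ ⟨_, ⟨_, ⟨u, -, _, rfl, rfl⟩, v, -, rfl⟩, rfl⟩
  have hf (w : A) : (1 - e) * ((1 - e) * w) = (1 - e) * w := by
    rw [← mul_assoc, he.one_sub.eq]
  refine ⟨e * u * (1 - e), mul_mul_one_sub_mem_offDiag he u,
    (1 - e) * v * e, one_sub_mul_mul_mem_offDiag he v, ?_⟩
  simp [corner, mul_assoc, hf]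

theorem one_mem_closure_offDiag_mul_offDiag (he : IsIdempotentElem e) (he0 : e ≠ 0)
    (he1 : e ≠ 1) : (1 : A) ∈ AddSubgroup.closure (offDiag e * offDiag e) := by
  have hf := mem_closure_offDiag_mul_offDiag he.one_sub (by simpa using he0)
  rw [offDiag_one_sub] at hf
  simpa using add_mem (mem_closure_offDiag_mul_offDiag he he1) hf

end SimpleRing

namespace IsSemisimpleRing

variable {A : Type*} [Ring A] [IsSemisimpleRing A]

theorem exists_mul_mul_eq_self (a : A) : ∃ b, a * b * a = a := by
  obtain ⟨e, he, hspan⟩ := ideal_eq_span_idempotent (Ideal.span {a})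
  obtain ⟨b, hb⟩ : ∃ b, b * a = e := Ideal.mem_span_singleton'.mp <| by
    rw [hspan]; exact Ideal.mem_span_singleton_self e
  obtain ⟨c, hc⟩ : ∃ c, c * e = a := Ideal.mem_span_singleton'.mp <| by
    rw [← hspan]; exact Ideal.mem_span_singleton_self a
  refine ⟨b, ?_⟩
  rw [mul_assoc, hb, ← hc, mul_assoc, he.eq]

theorem exists_commutator_eq_of_mul_self_eq_zero {a : A} (ha : a * a = 0) :
    ∃ x y : A, a = x * y - y * x := by
  obtain ⟨b, hb⟩ := exists_mul_mul_eq_self a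
  refine ⟨a * b, a, ?_⟩
  rw [← mul_assoc, ha, zero_mul, sub_zero, hb]

theorem exists_isIdempotentElem_ne_zero_ne_one [IsDedekindFiniteMonoid A] {a : A}
    (ha0 : a ≠ 0) (ha : ¬IsUnit a) : ∃ e : A, IsIdempotentElem e ∧ e ≠ 0 ∧ e ≠ 1 := by
  obtain ⟨b, hb⟩ := exists_mul_mul_eq_self a
  refine ⟨a * b, ?_, fun h => ha0 ?_, fun h => ha (IsUnit.of_mul_eq_one b h)⟩
  · rw [IsIdempotentElem, ← mul_assoc, hb]
  · rw [← hb, h, zero_mul]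

end IsSemisimpleRing

theorem square_zero_span_eq_commutator_span (F A : Type*) [Field F] [Ring A]
    [Algebra F A] [IsSimpleRing A] [FiniteDimensional F A]
    (hnd : ∃ a : A, a ≠ 0 ∧ ¬ IsUnit a) :
    Submodule.span F {a : A | a * a = 0} =
      Submodule.span F {c : A | ∃ x y : A, c = x * y - y * x} := by
  have : IsArtinianRing A := isArtinian_of_tower F inferInstance
  obtain ⟨a, ha0, ha⟩ := hnd
  obtain ⟨e, he, he0, he1⟩ := IsSemisimpleRing.exists_isIdempotentElem_ne_zero_ne_one ha0 ha
  refine le_antisymm (Submodule.span_mono fun a ha =>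
    IsSemisimpleRing.exists_commutator_eq_of_mul_self_eq_zero ha) (Submodule.span_le.mpr ?_)
  rintro _ ⟨x, y, rfl⟩
  exact mul_sub_mul_mem_squareZeroSpan_of_one_mem_closure he
    (one_mem_closure_offDiag_mul_offDiag he he0 he1) x y
end
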